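/- arXiv:2205.11099 — 2 statements merged into one kernel-verified Lean document; each statement's English description precedes it below -/
import Mathlib

section
/- Let (Z, 𝒟) be a probability space, (Ω, μ_A) a probability space modelling an algorithm's internal randomness, W a measurable space, A : Z^N × Ω → W a measurable map, and ℓ : W × Z → ℝ a bounded measurable loss. Fix ε ∈ (0,1) and δ > 0, and suppose there is a measurable set B ⊆ Z with 𝒟(B)^{N+1} > 1 − ε such that for every index i ∈ {1,…,N} and all samples S = (t_1,…,t_N) and S' = (t_1,…,t_{i−1}, t_i', t_{i+1},…,t_N) with t_1,…,t_N, t_i' ∈ B, one has sup_{t ∈ Z} ∫_Ω |ℓ(A(S,ω), t) − ℓ(A(S',ω), t)| dμ_A(ω) < δ. Then, setting C = B^N ⊆ Z^N, one has 𝒟^N(C) > 1 − ε and | E_{S ∼ 𝒟^N(·|C)} ∫_Ω [ (1/N) Σ_{i=1}^N ℓ(A(S,ω), t_i) − E_{S' ∼ 𝒟^N(·|C)} (1/N) Σ_{i=1}^N ℓ(A(S,ω), t_i') ] dμ_A(ω) | < δ, where 𝒟^N(·|C) denotes the conditional probability measure of the product measure 𝒟^N given the event C. -/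
/-!
Conditioning `𝒟^N` on the box `B^N` gives the product measure `(𝒟[|B])^N`. Writing
`f S t = ∫ ℓ (A S ω) t ∂μ_A`, the gap becomes the average over `i` of
`E[f S (S i)] - E[f S t]`, with `t` an independent draw. Resampling the `i`-th coordinate,
`(S, t) ↦ S[i ↦ t]`, preserves the product measure, so `E[f S (S i)] = E[f S[i ↦ t] t]`;
almost surely `S` and `S[i ↦ t]` both lie in `B^N` and differ only at `i`, so stability makes
the integrand `f S[i ↦ t] t - f S t` smaller than `δ` in absolute value.
-/

open MeasureTheory ProbabilityTheory Function

theorem abs_sum_div_lt {N : ℕ} {x : Fin N → ℝ} {δ : ℝ} (hδ : 0 < δ) (hx : ∀ i, |x i| < δ) :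
    |(∑ i, x i) / N| < δ := by
  rcases N.eq_zero_or_pos with rfl | hN
  · simpa using hδ
  rw [abs_div, Nat.abs_cast, div_lt_iff₀ (Nat.cast_pos.2 hN)]
  calc |∑ i, x i| ≤ ∑ i, |x i| := Finset.abs_sum_le_sum_abs _ _
    _ < ∑ _i : Fin N, δ :=
      Finset.sum_lt_sum_of_nonempty ⟨⟨0, hN⟩, Finset.mem_univ _⟩ fun i _ => hx i
    _ = δ * N := by simp [mul_comm]

namespace MeasureTheory

variable {α : Type*} [MeasurableSpace α] {μ : Measure α}

theorem Integrable.of_abs_le [IsFiniteMeasure μ] {f : α → ℝ} (hf : Measurable f) {C : ℝ}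
    (hfC : ∀ x, |f x| ≤ C) : Integrable f μ :=
  .of_bound hf.aestronglyMeasurable C (.of_forall hfC)

theorem abs_integral_le_of_abs_le [IsProbabilityMeasure μ] {f : α → ℝ} {C : ℝ}
    (hfC : ∀ x, |f x| ≤ C) : |∫ x, f x ∂μ| ≤ C := by
  simpa using norm_integral_le_of_norm_le_const (μ := μ)
    (.of_forall fun x => (Real.norm_eq_abs _).trans_le (hfC x))

theorem integral_lt_of_ae_lt [IsProbabilityMeasure μ] {f : α → ℝ} {c : ℝ}
    (hf : Integrable f μ) (h : ∀ᵐ x ∂μ, f x < c) : ∫ x, f x ∂μ < c := by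
  have hpos : 0 < ∫ x, (c - f x) ∂μ := by
    rw [integral_pos_iff_support_of_nonneg_ae (h.mono fun x hx => (sub_pos.2 hx).le)
      ((integrable_const c).sub hf), pos_iff_ne_zero]
    intro hnull
    obtain ⟨x, hlt, hzero⟩ := (h.and (measure_eq_zero_iff_ae_notMem.1 hnull)).exists
    exact hzero (sub_pos.2 hlt).ne'
  rwa [integral_sub (integrable_const c) hf, integral_const, probReal_univ, one_smul,
    sub_pos] at hpos

variable {ι : Type*} [Fintype ι] {X : ι → Type*} [∀ i, MeasurableSpace (X i)]

theorem measurePreserving_update_pi [DecidableEq ι] (μ : ∀ i, Measure (X i))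
    [∀ i, IsProbabilityMeasure (μ i)] (i : ι) :
    MeasurePreserving (fun p : (∀ j, X j) × X i => update p.1 i p.2)
      ((Measure.pi μ).prod (μ i)) (Measure.pi μ) := by
  refine ⟨measurable_update', (Measure.pi_eq fun s hs => ?_).symm⟩
  have hpre : (fun p : (∀ j, X j) × X i => update p.1 i p.2) ⁻¹' Set.univ.pi s
      = Set.univ.pi (update s i Set.univ) ×ˢ s i := by
    ext ⟨x, a⟩
    simp only [Set.mem_preimage, Set.mem_prod, Set.mem_univ_pi, forall_update_iff]
    grind
  rw [Measure.map_apply measurable_update' (.univ_pi hs), hpre, Measure.prod_prod, Measure.pi_pi]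
  simp_rw [apply_update (fun j => μ j), measure_univ]
  rw [Finset.prod_update_of_mem (Finset.mem_univ i), one_mul,
    ← Finset.prod_eq_prod_sdiff_singleton_mul (Finset.mem_univ i)]

theorem Measure.pi_cond_univ_pi (μ : ∀ i, Measure (X i)) [∀ i, IsFiniteMeasure (μ i)]
    {s : ∀ i, Set (X i)} (hs : ∀ i, MeasurableSet (s i)) :
    (Measure.pi μ)[|Set.univ.pi s] = Measure.pi fun i => (μ i)[|s i] := by
  refine (Measure.pi_eq fun t ht => ?_).symm
  rw [cond_apply (.univ_pi hs), ← Set.pi_inter_distrib, Measure.pi_pi, Measure.pi_pi]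
  simp_rw [cond_apply (hs _)]
  rw [ENNReal.prod_inv_distrib fun j _ k _ _ => Or.inr (measure_ne_top _ _),
    Finset.prod_mul_distrib]

end MeasureTheory

section ReplaceOne

variable {Z : Type*} [MeasurableSpace Z] {ν : Measure Z} [IsProbabilityMeasure ν]
  {ι : Type*} [Fintype ι]

theorem ae_pi_forall_mem {B : Set Z} (hB : ∀ᵐ t ∂ν, t ∈ B) :
    ∀ᵐ S ∂Measure.pi (fun _ : ι => ν), ∀ j, S j ∈ B :=
  ae_all_iff.2 fun j => (measurePreserving_eval (fun _ : ι => ν) j).quasiMeasurePreserving.ae hB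

theorem abs_integral_apply_self_sub_integral_lt [DecidableEq ι] {f : (ι → Z) → Z → ℝ}
    (hf : Measurable (uncurry f)) {C : ℝ} (hfC : ∀ S t, |f S t| ≤ C)
    {B : Set Z} (hB : ∀ᵐ t ∂ν, t ∈ B) {δ : ℝ} (i : ι)
    (hstab : ∀ S, (∀ j, S j ∈ B) → ∀ t ∈ B, |f (update S i t) t - f S t| < δ) :
    |∫ S, f S (S i) ∂Measure.pi (fun _ => ν) - ∫ S, ∫ t, f S t ∂ν ∂Measure.pi (fun _ => ν)|
      < δ := by
  set π := Measure.pi fun _ : ι => ν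
  have hmp : MeasurePreserving (fun p : (ι → Z) × Z => update p.1 i p.2) (π.prod ν) π :=
    measurePreserving_update_pi _ i
  have hfint : Integrable (fun p : (ι → Z) × Z => f p.1 p.2) (π.prod ν) :=
    .of_abs_le hf fun p => hfC p.1 p.2
  have hreplace : ∫ S, f S (S i) ∂π = ∫ p, f (update p.1 i p.2) p.2 ∂(π.prod ν) := by
    conv_lhs => rw [← hmp.map_eq]
    rw [integral_map hmp.measurable.aemeasurable (Measurable.aestronglyMeasurable (by fun_prop))]
    simp only [update_self]
  have hfubini : ∫ S, ∫ t, f S t ∂ν ∂π = ∫ p, f p.1 p.2 ∂(π.prod ν) :=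
    (integral_prod _ hfint).symm
  have hgood : ∀ᵐ p ∂(π.prod ν), (∀ j, p.1 j ∈ B) ∧ p.2 ∈ B :=
    (Measure.quasiMeasurePreserving_fst.ae (ae_pi_forall_mem hB)).and
      (Measure.quasiMeasurePreserving_snd.ae hB)
  rw [hreplace, hfubini, ← integral_sub (.of_abs_le (by fun_prop) fun p => hfC _ _) hfint]
  refine (abs_integral_le_integral_abs).trans_lt (integral_lt_of_ae_lt ?_ ?_)
  · exact .of_abs_le (by fun_prop) fun p => by
      rw [abs_abs]; exact (abs_sub _ _).trans (add_le_add (hfC _ _) (hfC _ _))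
  · filter_upwards [hgood] with p ⟨hS, ht⟩ using hstab p.1 hS p.2 ht

end ReplaceOne

section Gap

variable {Z Ω W : Type*} [MeasurableSpace Z] [MeasurableSpace Ω] [MeasurableSpace W]
  {ν : Measure Z} [IsProbabilityMeasure ν] {μA : Measure Ω} [IsProbabilityMeasure μA]
  {N : ℕ} {A : (Fin N → Z) → Ω → W} {ℓ : W → Z → ℝ} {C : ℝ}

theorem measurable_integral_loss (hA : Measurable (uncurry A)) (hℓ : Measurable (uncurry ℓ)) :
    Measurable (uncurry fun S t => ∫ ω, ℓ (A S ω) t ∂μA) :=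
  (show Measurable fun p : ((Fin N → Z) × Z) × Ω => ℓ (A p.1.1 p.2) p.1.2 by fun_prop)
    |>.stronglyMeasurable.integral_prod_right'.measurable

theorem integral_generalizationGap_eq (hA : Measurable (uncurry A))
    (hℓ : Measurable (uncurry ℓ)) (hℓC : ∀ w t, |ℓ w t| ≤ C) :
    ∫ S : Fin N → Z, ∫ ω, ((∑ i, ℓ (A S ω) (S i)) / N -
        ∫ S' : Fin N → Z, (∑ i, ℓ (A S ω) (S' i)) / N ∂Measure.pi (fun _ => ν)) ∂μA
      ∂Measure.pi (fun _ => ν)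
    = (∑ i, (∫ S, ∫ ω, ℓ (A S ω) (S i) ∂μA ∂Measure.pi (fun _ => ν) -
        ∫ S, ∫ t, ∫ ω, ℓ (A S ω) t ∂μA ∂ν ∂Measure.pi (fun _ => ν))) / N := by
  set π := Measure.pi fun _ : Fin N => ν
  have hrisk : ∀ w, ∫ S', (∑ i, ℓ w (S' i)) / N ∂π = (∑ _i : Fin N, ∫ t, ℓ w t ∂ν) / N := by
    intro w
    rw [integral_div, integral_finsetSum _ fun i _ => .of_abs_le (by fun_prop) fun S => hℓC w _]
    exact congrArg (· / (N : ℝ)) (Finset.sum_congr rfl fun i _ =>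
      integral_comp_eval (hℓ.comp measurable_prodMk_left).aestronglyMeasurable)
  simp only [hrisk]
  set f := fun S t => ∫ ω, ℓ (A S ω) t ∂μA
  set R := fun w => ∫ t, ℓ w t ∂ν
  have hf : Measurable (uncurry f) := measurable_integral_loss hA hℓ
  have hR : Measurable R := hℓ.stronglyMeasurable.integral_prod_right'.measurable
  have hF : Measurable fun S => ∫ t, f S t ∂ν :=
    hf.stronglyMeasurable.integral_prod_right.measurable
  have hfC : ∀ S t, |f S t| ≤ C := fun S t => abs_integral_le_of_abs_le fun ω => hℓC _ t
  have hRC : ∀ w, |R w| ≤ C := fun w => abs_integral_le_of_abs_le (hℓC w)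
  have hω : ∀ S, ∫ ω, ((∑ i, ℓ (A S ω) (S i)) / N - (∑ _i : Fin N, R (A S ω)) / N) ∂μA
      = (∑ i, (f S (S i) - ∫ t, f S t ∂ν)) / N := by
    intro S
    simp_rw [← sub_div, ← Finset.sum_sub_distrib]
    rw [integral_div, integral_finsetSum _ fun i _ => .of_abs_le (by fun_prop) fun ω =>
      (abs_sub _ _).trans (add_le_add (hℓC _ _) (hRC _))]
    refine congrArg (· / (N : ℝ)) (Finset.sum_congr rfl fun i _ => ?_)
    rw [integral_sub (.of_abs_le (by fun_prop) fun ω => hℓC _ _)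
      (.of_abs_le (by fun_prop) fun ω => hRC _)]
    exact congrArg (f S (S i) - ·)
      (integral_integral_swap (.of_abs_le (by fun_prop) fun p => hℓC _ _))
  rw [integral_congr_ae (.of_forall hω)]
  have hgap : ∀ i, Measurable fun S => f S (S i) - ∫ t, f S t ∂ν := fun i =>
    (show Measurable fun S => f S (S i) by fun_prop).sub hF
  rw [integral_div, integral_finsetSum _ fun i _ => .of_abs_le (hgap i) fun S =>
    (abs_sub _ _).trans (add_le_add (hfC _ _) (abs_integral_le_of_abs_le (hfC S)))]
  refine congrArg (· / (N : ℝ)) (Finset.sum_congr rfl fun i _ => ?_)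
  exact integral_sub (.of_abs_le (by fun_prop) fun S => hfC _ _)
    (.of_abs_le hF fun S => abs_integral_le_of_abs_le (hfC S))

theorem abs_integral_loss_sub_lt (hA : Measurable (uncurry A)) (hℓ : Measurable (uncurry ℓ))
    (hℓC : ∀ w t, |ℓ w t| ≤ C) {S S' : Fin N → Z} {δ : ℝ}
    (h : (⨆ t, ∫ ω, |ℓ (A S ω) t - ℓ (A S' ω) t| ∂μA) < δ) (t : Z) :
    |∫ ω, ℓ (A S ω) t ∂μA - ∫ ω, ℓ (A S' ω) t ∂μA| < δ := by
  have hdiff : ∀ t ω, |ℓ (A S ω) t - ℓ (A S' ω) t| ≤ C + C := fun t ω =>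
    (abs_sub _ _).trans (add_le_add (hℓC _ _) (hℓC _ _))
  have hbdd : BddAbove (Set.range fun t => ∫ ω, |ℓ (A S ω) t - ℓ (A S' ω) t| ∂μA) := by
    refine ⟨C + C, ?_⟩
    rintro _ ⟨t, rfl⟩
    exact (le_abs_self _).trans
      (abs_integral_le_of_abs_le fun ω => (abs_abs _).trans_le (hdiff t ω))
  rw [← integral_sub (.of_abs_le (by fun_prop) fun ω => hℓC _ _)
    (.of_abs_le (by fun_prop) fun ω => hℓC _ _)]
  exact abs_integral_le_integral_abs.trans_lt ((le_ciSup hbdd t).trans_lt h)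

theorem abs_integral_generalizationGap_lt (hA : Measurable (uncurry A))
    (hℓ : Measurable (uncurry ℓ)) (hℓC : ∀ w t, |ℓ w t| ≤ C) {δ : ℝ} (hδ : 0 < δ) {B : Set Z}
    (hB : ∀ᵐ t ∂ν, t ∈ B)
    (hstab : ∀ (i : Fin N) (S S' : Fin N → Z), (∀ j, S j ∈ B) → (∀ j, S' j ∈ B) →
      (∀ j, j ≠ i → S j = S' j) →
      (⨆ t : Z, ∫ ω, |ℓ (A S ω) t - ℓ (A S' ω) t| ∂μA) < δ) :
    |∫ S : Fin N → Z, ∫ ω, ((∑ i, ℓ (A S ω) (S i)) / N -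
        ∫ S' : Fin N → Z, (∑ i, ℓ (A S ω) (S' i)) / N ∂Measure.pi (fun _ => ν)) ∂μA
      ∂Measure.pi (fun _ => ν)| < δ := by
  rw [integral_generalizationGap_eq hA hℓ hℓC]
  refine abs_sum_div_lt hδ fun i => abs_integral_apply_self_sub_integral_lt
    (measurable_integral_loss hA hℓ) (fun S t => abs_integral_le_of_abs_le fun ω => hℓC _ t) hB i
    fun S hS t ht => abs_integral_loss_sub_lt hA hℓ hℓC (hstab i _ _ ?_ hS
      fun j hj => update_of_ne hj _ _) t
  intro j
  rcases eq_or_ne j i with rfl | hj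
  · simpa using ht
  · simpa [update_of_ne hj] using hS j

end Gap

theorem pac_stability_generalization_gap_general
    {Z Ω W : Type*} [MeasurableSpace Z] [MeasurableSpace Ω] [MeasurableSpace W]
    (Dm : Measure Z) [IsProbabilityMeasure Dm]
    (muA : Measure Ω) [IsProbabilityMeasure muA]
    (N : ℕ)
    (A : (Fin N → Z) → Ω → W) (hA : Measurable (Function.uncurry A))
    (ℓ : W → Z → ℝ) (hℓ : Measurable (Function.uncurry ℓ))
    (Cb : ℝ) (hbdd : ∀ w t, |ℓ w t| ≤ Cb)
    (ε δ : ℝ) (hδ : 0 < δ)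
    (B : Set Z) (hB : MeasurableSet B)
    (hBprob : 1 - ENNReal.ofReal ε < Dm B ^ (N + 1))
    (hstab : ∀ (i : Fin N) (S S' : Fin N → Z), (∀ j, S j ∈ B) → (∀ j, S' j ∈ B) →
      (∀ j, j ≠ i → S j = S' j) →
      (⨆ t : Z, ∫ ω, |ℓ (A S ω) t - ℓ (A S' ω) t| ∂muA) < δ) :
    1 - ENNReal.ofReal ε <
        (Measure.pi fun _ : Fin N => Dm) {S : Fin N → Z | ∀ j, S j ∈ B} ∧
    |∫ S, ∫ ω,
        ((∑ i, ℓ (A S ω) (S i)) / N -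
          ∫ S', (∑ i, ℓ (A S ω) (S' i)) / N
            ∂((Measure.pi fun _ : Fin N => Dm)[|{S : Fin N → Z | ∀ j, S j ∈ B}]))
        ∂muA ∂((Measure.pi fun _ : Fin N => Dm)[|{S : Fin N → Z | ∀ j, S j ∈ B}])| < δ := by
  have hbox : {S : Fin N → Z | ∀ j, S j ∈ B} = Set.univ.pi fun _ => B := by ext; simp
  have hBpos : Dm B ≠ 0 := by
    rintro hB0
    simp [hB0] at hBprob
  have := cond_isProbabilityMeasure (s := B) hBpos
  refine ⟨?_, ?_⟩
  · rw [hbox, Measure.pi_pi, Finset.prod_const, Finset.card_univ, Fintype.card_fin]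
    exact hBprob.trans_le (pow_le_pow_of_le_one bot_le prob_le_one N.le_succ)
  · rw [hbox, Measure.pi_cond_univ_pi _ fun _ => hB]
    exact abs_integral_generalizationGap_lt hA hℓ hbdd hδ (ae_cond_mem hB) hstab

/-- **Decomposable PAC uniform stability bounds the conditional generalization gap.**
`Dm` is the sample distribution `𝒟` on `Z`, `muA` models the algorithm's internal
randomness, `A` is the (randomized) algorithm, `ℓ` is a bounded measurable loss.
The hypothesis `hstab` is the decomposable PAC uniform stability condition on the
event `D_ε = B^{N+1}`; the conclusion states that `C = B^N` has probability greater
than `1 - ε` under `𝒟^N` and that the expected generalization gap, conditioned on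
`C` (with the conditional generalization error also taken over `𝒟^N(·|C)`), is
smaller than `δ` in absolute value. -/
theorem pac_stability_generalization_gap
    {Z Ω W : Type*} [MeasurableSpace Z] [MeasurableSpace Ω] [MeasurableSpace W]
    (Dm : Measure Z) [IsProbabilityMeasure Dm]
    (muA : Measure Ω) [IsProbabilityMeasure muA]
    (N : ℕ) (hN : 0 < N)
    (A : (Fin N → Z) → Ω → W) (hA : Measurable (Function.uncurry A))
    (ℓ : W → Z → ℝ) (hℓ : Measurable (Function.uncurry ℓ))
    (Cb : ℝ) (hbdd : ∀ w t, |ℓ w t| ≤ Cb)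
    (ε δ : ℝ) (hε : ε ∈ Set.Ioo (0 : ℝ) 1) (hδ : 0 < δ)
    (B : Set Z) (hB : MeasurableSet B)
    (hBprob : 1 - ENNReal.ofReal ε < Dm B ^ (N + 1))
    (hstab : ∀ (i : Fin N) (S S' : Fin N → Z), (∀ j, S j ∈ B) → (∀ j, S' j ∈ B) →
      (∀ j, j ≠ i → S j = S' j) →
      (⨆ t : Z, ∫ ω, |ℓ (A S ω) t - ℓ (A S' ω) t| ∂muA) < δ) :
    1 - ENNReal.ofReal ε <
        (Measure.pi fun _ : Fin N => Dm) {S : Fin N → Z | ∀ j, S j ∈ B} ∧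
    |∫ S, ∫ ω,
        ((∑ i, ℓ (A S ω) (S i)) / N -
          ∫ S', (∑ i, ℓ (A S ω) (S' i)) / N
            ∂((Measure.pi fun _ : Fin N => Dm)[|{S : Fin N → Z | ∀ j, S j ∈ B}]))
        ∂muA ∂((Measure.pi fun _ : Fin N => Dm)[|{S : Fin N → Z | ∀ j, S j ∈ B}])| < δ :=
  pac_stability_generalization_gap_general Dm muA N A hA ℓ hℓ Cb hbdd ε δ hδ B hB hBprob hstab
end

section
/- Let A ∈ ℝ^{n×n} be a symmetric positive definite matrix and let b ∈ ℝ^n. Then ‖ A^{−1} b b^⊤ A^{−1} / (1 + b^⊤ A^{−1} b) ‖_F ≤ 1 / λ_min(A), where λ_min(A) > 0 is the smallest eigenvalue of A. -/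
/-! With `y = A⁻¹ b`, the matrix `A⁻¹ b bᵀ A⁻¹` is `y yᵀ`, whose Frobenius norm is `‖y‖²`, and
`bᵀ A⁻¹ b = yᵀ A y ≥ 0`. The Rayleigh bound `λ_min(A) ‖y‖² ≤ yᵀ A y`, i.e. `λ_min(A) • 1 ≤ A` in
the Loewner order, then gives `‖y‖² / (1 + yᵀ A y) ≤ 1 / λ_min(A)`. -/

open Matrix

noncomputable section

/-- Frobenius norm of a matrix. -/
def frob {m n : Type*} [Fintype m] [Fintype n] (A : Matrix m n ℝ) : ℝ :=
  Real.sqrt (∑ i, ∑ j, A i j ^ 2)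

/-- Smallest eigenvalue of a symmetric real matrix (junk value `0` otherwise). -/
def lamMin {n : Type*} [Fintype n] [DecidableEq n] (A : Matrix n n ℝ) : ℝ :=
  letI := Classical.dec A.IsHermitian
  if h : A.IsHermitian then ⨅ i, h.eigenvalues i else 0

theorem frob_smul {m n : Type*} [Fintype m] [Fintype n] (c : ℝ) (M : Matrix m n ℝ) :
    frob (c • M) = |c| * frob M := by
  simp only [frob, Matrix.smul_apply, smul_eq_mul, mul_pow, ← Finset.mul_sum]
  rw [Real.sqrt_mul (sq_nonneg c), Real.sqrt_sq_eq_abs]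

theorem frob_vecMulVec_self {n : Type*} [Fintype n] (y : n → ℝ) :
    frob (vecMulVec y y) = y ⬝ᵥ y := by
  have hsq : ∑ i, ∑ j, vecMulVec y y i j ^ 2 = (y ⬝ᵥ y) ^ 2 := by
    simp only [sq, dotProduct, Fintype.sum_mul_sum, vecMulVec_apply]
    exact Fintype.sum_congr _ _ fun i ↦ Fintype.sum_congr _ _ fun j ↦ by ring
  have hnonneg : 0 ≤ y ⬝ᵥ y := Fintype.sum_nonneg fun i ↦ mul_self_nonneg (y i)
  rw [frob, hsq, Real.sqrt_sq hnonneg]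

theorem Matrix.IsSymm.mul_vecMulVec_self_mul {α n : Type*} [CommSemiring α] [Fintype n]
    {M : Matrix n n α} (hM : M.IsSymm) (x : n → α) :
    M * vecMulVec x x * M = vecMulVec (M *ᵥ x) (M *ᵥ x) := by
  rw [mul_vecMulVec, vecMulVec_mul, ← mulVec_transpose, hM.eq]

section lamMin

variable {n : Type*} [Fintype n] [DecidableEq n] {A : Matrix n n ℝ}

theorem Matrix.IsHermitian.lamMin_eq (hA : A.IsHermitian) : lamMin A = ⨅ i, hA.eigenvalues i :=
  dif_pos hA

theorem Matrix.IsHermitian.lamMin_le_eigenvalues (hA : A.IsHermitian) (i : n) :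
    lamMin A ≤ hA.eigenvalues i :=
  hA.lamMin_eq ▸ ciInf_le (Finite.bddBelow_range _) i

theorem Matrix.PosDef.lamMin_pos [Nonempty n] (hA : A.PosDef) : 0 < lamMin A := by
  obtain ⟨i, hi⟩ := exists_eq_ciInf_of_finite (f := hA.isHermitian.eigenvalues)
  rw [hA.isHermitian.lamMin_eq, ← hi]
  exact hA.eigenvalues_pos i

theorem Matrix.PosSemidef.lamMin_nonneg (hA : A.PosSemidef) : 0 ≤ lamMin A :=
  hA.isHermitian.lamMin_eq ▸ Real.iInf_nonneg hA.eigenvalues_nonneg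

open scoped MatrixOrder in
theorem Matrix.IsHermitian.lamMin_smul_one_le (hA : A.IsHermitian) : lamMin A • 1 ≤ A := by
  rw [← Algebra.algebraMap_eq_smul_one, algebraMap_le_iff_le_spectrum hA.isSelfAdjoint,
    hA.spectrum_real_eq_range_eigenvalues]
  rintro _ ⟨i, rfl⟩
  exact hA.lamMin_le_eigenvalues i

theorem Matrix.IsHermitian.lamMin_mul_dotProduct_self_le (hA : A.IsHermitian) (y : n → ℝ) :
    lamMin A * (y ⬝ᵥ y) ≤ y ⬝ᵥ A *ᵥ y := by
  have := (Matrix.le_iff.mp hA.lamMin_smul_one_le).dotProduct_mulVec_nonneg y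
  simpa [sub_mulVec, dotProduct_sub, smul_mulVec, dotProduct_smul] using this

end lamMin

/-- **Key deterministic estimate in Lemma 6.3 of the paper.** For a symmetric positive
definite `A` and any vector `b`,
`‖ A⁻¹ b bᵀ A⁻¹ / (1 + bᵀ A⁻¹ b) ‖_F ≤ 1 / λ_min(A)`. -/
theorem frob_sherman_morrison_term_le (n : ℕ) (A : Matrix (Fin n) (Fin n) ℝ)
    (hA : A.PosDef) (b : Fin n → ℝ) :
    frob ((1 + b ⬝ᵥ A⁻¹.mulVec b)⁻¹ • (A⁻¹ * vecMulVec b b * A⁻¹)) ≤ 1 / lamMin A := by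
  set y := A⁻¹ *ᵥ b
  have hq : b ⬝ᵥ A⁻¹ *ᵥ b = y ⬝ᵥ A *ᵥ y := by
    rw [mulVec_mulVec, mul_nonsing_inv A ((isUnit_iff_isUnit_det A).mp hA.isUnit), one_mulVec,
      dotProduct_comm]
  have hq_nonneg : 0 ≤ y ⬝ᵥ A *ᵥ y := by
    simpa using hA.posSemidef.dotProduct_mulVec_nonneg y
  rw [(isHermitian_iff_isSymm.mp hA.isHermitian.inv).mul_vecMulVec_self_mul, frob_smul,
    frob_vecMulVec_self, hq, abs_of_pos (by positivity)]
  rcases isEmpty_or_nonempty (Fin n) with _ | _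
  · -- `n = 0`: the left side is `0`, and so is `1 / lamMin A` (an empty `⨅` in `ℝ` is `0`)
    simpa using hA.posSemidef.lamMin_nonneg
  · have hrayleigh := hA.isHermitian.lamMin_mul_dotProduct_self_le y
    rw [inv_mul_eq_div, div_le_div_iff₀ (by positivity) hA.lamMin_pos]
    linarith

end
end
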